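/- Let V = (ZMod 2)^n, let f, g : V → ℝ, let D_f and D_g be the diagonal matrices with (D_f)_{x,x} = f(x) and (D_g)_{y,y} = g(y), let H be the Hadamard matrix with entries H_{x,y} = 2^{−n/2}(−1)^{x·y}, and let C = H·D_g·H·D_f·H. Define the forrelation Φ = 2^{−3n/2} Σ_{x,y ∈ V} f(x)·(−1)^{x·y}·g(y). Then (1/2^n) Σ_{w,z ∈ V} (−1)^{w·z} |C_{z,w}|² = Φ². -/

import Mathlib

open Matrix
open scoped ComplexOrder

/-- The real sign `(-1)^a` of an element `a : ZMod 2`. -/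
def signOf (a : ZMod 2) : ℝ := if a = 0 then 1 else -1

/-!
Write `W` for the `±1` matrix `((-1)^{x·y})`, so that `H = 2^{-n/2} W` and `C = 2^{-3n/2} M` with
`M = W D_g W D_f W` real. Since `(-1)^{y·x} (-1)^{x·w} = (-1)^{x·(y+w)}`, the middle factor is
`(W D_f W)_{y,w} = f̂(y + w)` with `f̂ = W f`, so column `w` of `M` is `W a_w` for
`a_w(y) = g(y) f̂(y + w)`. Orthogonality of characters turns the twisted square norm
`∑_z (-1)^{w·z} (W a)_z²` into the autocorrelation `2^n ∑_y a(y) a(y + w)`; as `w + w = 0`, the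
autocorrelation of `a_w` is `∑_y b(y) b(y + w)` with `b = g f̂`, and summing over `w` gives
`(∑ b)² = 2^{3n} Φ²`.
-/

lemma signOf_add (a b : ZMod 2) : signOf (a + b) = signOf a * signOf b := by
  have h01 : ∀ c : ZMod 2, c = 0 ∨ c = 1 := by decide
  obtain rfl | rfl := h01 a <;> obtain rfl | rfl := h01 b <;>
    simp [signOf, show (1 : ZMod 2) + 1 = 0 from rfl]

lemma sum_sum_mul_mul_add {G R : Type*} [AddGroup G] [Fintype G] [CommSemiring R] (b : G → R) :
    ∑ w, ∑ y, b y * b (y + w) = (∑ y, b y) ^ 2 := by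
  rw [Finset.sum_comm, sq, Finset.sum_mul_sum]
  exact Finset.sum_congr rfl fun y _ => Equiv.sum_comp (Equiv.addLeft y) (fun u => b y * b u)

section SignMatrix

variable {ι : Type*} [Fintype ι] [DecidableEq ι]

lemma sum_signOf_dotProduct (u : ι → ZMod 2) :
    ∑ v : ι → ZMod 2, signOf (v ⬝ᵥ u) = if u = 0 then (2 : ℝ) ^ Fintype.card ι else 0 := by
  split_ifs with hu
  · simp [hu, signOf]
  · obtain ⟨i, hi⟩ : ∃ i, u i ≠ 0 := by simpa [funext_iff] using hu
    have hflip : signOf (Pi.single i 1 ⬝ᵥ u) = -1 := by simp [signOf, hi]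
    -- translating by the basis vector `e_i` flips every sign, so the sum equals its negative
    have hshift := Equiv.sum_comp (Equiv.addRight (Pi.single i 1)) fun v => signOf (v ⬝ᵥ u)
    simp only [Equiv.coe_addRight, add_dotProduct, signOf_add, hflip, mul_neg_one,
      Finset.sum_neg_distrib] at hshift
    linarith

variable (ι) in
def signMatrix : Matrix (ι → ZMod 2) (ι → ZMod 2) ℝ := of fun x y => signOf (x ⬝ᵥ y)

lemma signMatrix_mulVec_apply (a : (ι → ZMod 2) → ℝ) (x : ι → ZMod 2) :
    (signMatrix ι *ᵥ a) x = ∑ y, signOf (x ⬝ᵥ y) * a y := rfl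

lemma signMatrix_mul_diagonal_mul_signMatrix_apply (d : (ι → ZMod 2) → ℝ)
    (x y : ι → ZMod 2) :
    (signMatrix ι * diagonal d * signMatrix ι) x y = (signMatrix ι *ᵥ d) (x + y) := by
  rw [mul_apply, signMatrix_mulVec_apply]
  refine Finset.sum_congr rfl fun v _ => ?_
  rw [mul_diagonal, signMatrix, of_apply, of_apply, dotProduct_comm v y, add_dotProduct,
    signOf_add]
  ring

lemma sum_signOf_mul_mulVec_sq (a : (ι → ZMod 2) → ℝ) (w : ι → ZMod 2) :
    ∑ z, signOf (w ⬝ᵥ z) * (signMatrix ι *ᵥ a) z ^ 2 =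
      2 ^ Fintype.card ι * ∑ x, a x * a (x + w) := by
  have hsolve : ∀ x y : ι → ZMod 2, x + y + w = 0 ↔ y = x + w := fun x y => by
    rw [add_right_comm, add_eq_zero_iff_neg_eq, ZModModule.neg_eq_self, eq_comm]
  have hsign : ∀ x y z : ι → ZMod 2,
      signOf (w ⬝ᵥ z) * (signOf (z ⬝ᵥ x) * a x * (signOf (z ⬝ᵥ y) * a y)) =
        a x * a y * signOf (z ⬝ᵥ (x + y + w)) := fun x y z => by
    rw [dotProduct_add, dotProduct_add, signOf_add, signOf_add, dotProduct_comm w z]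
    ring
  calc ∑ z, signOf (w ⬝ᵥ z) * (signMatrix ι *ᵥ a) z ^ 2
      = ∑ z, ∑ x, ∑ y, signOf (w ⬝ᵥ z) * (signOf (z ⬝ᵥ x) * a x * (signOf (z ⬝ᵥ y) * a y)) := by
        simp only [signMatrix_mulVec_apply, sq, Finset.sum_mul_sum]
        simp only [Finset.mul_sum]
    _ = ∑ x, ∑ y, a x * a y * ∑ z, signOf (z ⬝ᵥ (x + y + w)) := by
        rw [Finset.sum_comm]
        refine Finset.sum_congr rfl fun x _ => ?_
        rw [Finset.sum_comm]
        simp only [hsign, Finset.mul_sum]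
    _ = 2 ^ Fintype.card ι * ∑ x, a x * a (x + w) := by
        simp only [sum_signOf_dotProduct, hsolve, mul_ite, mul_zero, Finset.sum_ite_eq',
          Finset.mem_univ, if_true, Finset.mul_sum]
        exact Finset.sum_congr rfl fun y _ => by ring

lemma sum_sum_signOf_mul_sq_signMatrix_mul_diagonal (f g : (ι → ZMod 2) → ℝ) :
    ∑ w, ∑ z, signOf (w ⬝ᵥ z) *
        (signMatrix ι * diagonal g * signMatrix ι * diagonal f * signMatrix ι) z w ^ 2 =
      2 ^ Fintype.card ι * (∑ y, g y * (signMatrix ι *ᵥ f) y) ^ 2 := by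
  have hcolumn : ∀ z w, (signMatrix ι * diagonal g * signMatrix ι * diagonal f * signMatrix ι) z w
      = (signMatrix ι *ᵥ fun y => g y * (signMatrix ι *ᵥ f) (y + w)) z := fun z w => by
    rw [show signMatrix ι * diagonal g * signMatrix ι * diagonal f * signMatrix ι =
      signMatrix ι * diagonal g * (signMatrix ι * diagonal f * signMatrix ι) by
        simp only [Matrix.mul_assoc], mul_apply]
    simp only [mul_diagonal, signMatrix_mul_diagonal_mul_signMatrix_apply]
    exact Finset.sum_congr rfl fun y _ => mul_assoc _ _ _
  calc ∑ w, ∑ z, signOf (w ⬝ᵥ z) *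
        (signMatrix ι * diagonal g * signMatrix ι * diagonal f * signMatrix ι) z w ^ 2
      = ∑ w, 2 ^ Fintype.card ι * ∑ y, g y * (signMatrix ι *ᵥ f) (y + w) *
          (g (y + w) * (signMatrix ι *ᵥ f) (y + w + w)) := by
        simp only [hcolumn, sum_signOf_mul_mulVec_sq]
    _ = 2 ^ Fintype.card ι * ∑ w, ∑ y, g y * (signMatrix ι *ᵥ f) y *
          (g (y + w) * (signMatrix ι *ᵥ f) (y + w)) := by
        simp only [add_assoc, ZModModule.add_self, add_zero, Finset.mul_sum]
        exact Finset.sum_congr rfl fun w _ => Finset.sum_congr rfl fun y _ => by ring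
    _ = 2 ^ Fintype.card ι * (∑ y, g y * (signMatrix ι *ᵥ f) y) ^ 2 := by
        rw [sum_sum_mul_mul_add fun y => g y * (signMatrix ι *ᵥ f) y]

end SignMatrix

theorem half_bqp_two_forrelation (n : ℕ) (f g : (Fin n → ZMod 2) → ℝ)
    (Df Dg H C : Matrix (Fin n → ZMod 2) (Fin n → ZMod 2) ℂ)
    (hDf : Df = Matrix.diagonal fun x => ((f x : ℝ) : ℂ))
    (hDg : Dg = Matrix.diagonal fun y => ((g y : ℝ) : ℂ))
    (hH : H = Matrix.of fun x y => (((Real.sqrt (2 ^ n))⁻¹ * signOf (x ⬝ᵥ y) : ℝ) : ℂ))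
    (hC : C = H * Dg * H * Df * H)
    (Φ : ℝ)
    (hΦ : Φ = (Real.sqrt (2 ^ n) ^ 3)⁻¹ * ∑ x, ∑ y, f x * signOf (x ⬝ᵥ y) * g y) :
    (1 / 2 ^ n) * ∑ w, ∑ z, signOf (w ⬝ᵥ z) * ‖C z w‖ ^ 2 = Φ ^ 2 := by
  set s := (Real.sqrt (2 ^ n))⁻¹
  set M := signMatrix (Fin n) * diagonal g * signMatrix (Fin n) * diagonal f * signMatrix (Fin n)
  have hdiag : ∀ d : (Fin n → ZMod 2) → ℝ,
      diagonal (fun x => ((d x : ℝ) : ℂ)) = (diagonal d).map Complex.ofRealHom :=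
    fun d => by rw [diagonal_map (map_zero _)]; rfl
  have hHW : H = (s : ℂ) • (signMatrix (Fin n)).map Complex.ofRealHom := by
    ext; simp [hH, signMatrix]
  have hCM : C = ((s ^ 3 : ℝ) : ℂ) • M.map Complex.ofRealHom := by
    simp only [hC, hHW, hDf, hDg, hdiag, Matrix.smul_mul, Matrix.mul_smul, smul_smul, M,
      Matrix.map_mul]
    push_cast
    ring_nf
  have hΦW : Φ = s ^ 3 * ∑ y, g y * (signMatrix (Fin n) *ᵥ f) y := by
    rw [hΦ, inv_pow, Finset.sum_comm]
    simp only [signMatrix_mulVec_apply, Finset.mul_sum]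
    exact Finset.sum_congr rfl fun y _ => Finset.sum_congr rfl fun x _ => by
      rw [dotProduct_comm]; ring
  have hnorm : ∀ z w, ‖C z w‖ ^ 2 = (s ^ 3) ^ 2 * M z w ^ 2 := fun z w => by
    simp only [hCM, Matrix.smul_apply, map_apply, Complex.ofRealHom_eq_coe, smul_eq_mul,
      ← Complex.ofReal_mul, Complex.norm_real, Real.norm_eq_abs, sq_abs, mul_pow]
  calc (1 / 2 ^ n) * ∑ w, ∑ z, signOf (w ⬝ᵥ z) * ‖C z w‖ ^ 2
      = (1 / 2 ^ n) * (s ^ 3) ^ 2 * ∑ w, ∑ z, signOf (w ⬝ᵥ z) * M z w ^ 2 := by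
        simp only [hnorm, mul_left_comm (signOf _), ← Finset.mul_sum, mul_assoc]
    _ = Φ ^ 2 := by
        rw [sum_sum_signOf_mul_sq_signMatrix_mul_diagonal, hΦW, Fintype.card_fin]
        field_simp
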